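/- arXiv:1101.3084 — 2 statements merged into one kernel-verified Lean document; each statement's English description precedes it below -/
import Mathlib

section
/- Let A : 𝔻 × 𝔻 → ℂ be Borel measurable and K-invariant in its second argument, i.e. A(x, e^{iα}·y) = A(x, y) for all x, y ∈ 𝔻 and all α ∈ ℝ. Then ∫_𝔻 ∫_𝔻 |A(x, y)|² dμ(y) dμ(x) = ∫_𝔻 ∫_𝔻 |A(M(x,y), φ_x(y))|² dμ(y) dμ(x) (as an identity of integrals with values in [0, ∞]). -/
/-!
Substituting `y = φ_x w` (`φ_x` preserves `μ`), the midpoint of `x` and `φ_x w` is `φ_x c(w)`,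
where `c(w)` is the midpoint of `0` and `w`, and by `K`-invariance `A(v, w)` depends on `w` only
through `‖w‖`. The map `x ↦ φ_x c` does not preserve `μ`, but it does so after averaging over
rotations: rotating `w` by `u` rotates `φ_x c(w)` by `u`, and the rotation average of a function
at `φ_x c` depends only on `‖φ_x c‖ = ‖φ_c x‖`, while `φ_c` preserves `μ`.
-/

open MeasureTheory

/-- The open unit disc in the complex plane. -/
def Disc : Set ℂ := {z : ℂ | ‖z‖ < 1}

/-- The geodesic symmetry `φ_a(z) = (a - z)/(1 - conj(a)·z)`. -/
noncomputable def phi (a z : ℂ) : ℂ := (a - z) / (1 - (starRingEnd ℂ) a * z)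

/-- The hyperbolic measure `dμ(z) = (1 - |z|²)⁻² dA(z)` on the unit disc. -/
noncomputable def hypMeasure : Measure ℂ :=
  (volume.restrict Disc).withDensity fun z => ENNReal.ofReal ((1 - ‖z‖ ^ 2)⁻¹ ^ 2)

open Complex Set
open scoped ComplexConjugate ENNReal

lemma mem_disc_iff_sq_norm_lt_one {z : ℂ} : z ∈ Disc ↔ ‖z‖ ^ 2 < 1 :=
  (sq_lt_one_iff₀ (norm_nonneg z)).symm

lemma measurableSet_disc : MeasurableSet Disc :=
  measurableSet_lt continuous_norm.measurable measurable_const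

lemma zero_mem_disc : (0 : ℂ) ∈ Disc := by simp [Disc]

lemma neg_mem_disc {z : ℂ} (hz : z ∈ Disc) : -z ∈ Disc := by simpa [Disc] using hz

lemma one_sub_conj_mul_ne_zero {a z : ℂ} (ha : a ∈ Disc) (hz : z ∈ Disc) :
    1 - conj a * z ≠ 0 := by
  refine sub_ne_zero.mpr fun h => ?_
  have : ‖conj a * z‖ < 1 := by
    rw [norm_mul, norm_conj]
    exact mul_lt_one_of_nonneg_of_lt_one_left (norm_nonneg a) ha hz.le
  simp [← h] at this

lemma one_sub_sq_norm_phi {a z : ℂ} (ha : a ∈ Disc) (hz : z ∈ Disc) :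
    1 - ‖phi a z‖ ^ 2 = (1 - ‖a‖ ^ 2) * (1 - ‖z‖ ^ 2) / ‖1 - conj a * z‖ ^ 2 := by
  have hd : ‖1 - conj a * z‖ ^ 2 ≠ 0 := by
    simpa using one_sub_conj_mul_ne_zero ha hz
  rw [phi, norm_div, div_pow, eq_div_iff hd, sub_mul, div_mul_cancel₀ _ hd]
  simp only [← normSq_eq_norm_sq, normSq_apply, sub_re, sub_im, one_re, one_im, mul_re, mul_im,
    conj_re, conj_im]
  ring

lemma phi_mem_disc {a z : ℂ} (ha : a ∈ Disc) (hz : z ∈ Disc) : phi a z ∈ Disc := by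
  have hd := norm_pos_iff.mpr (one_sub_conj_mul_ne_zero ha hz)
  have h := one_sub_sq_norm_phi ha hz
  rw [mem_disc_iff_sq_norm_lt_one] at ha hz ⊢
  have : 0 < 1 - ‖phi a z‖ ^ 2 := h ▸ by
    have := sub_pos.mpr ha; have := sub_pos.mpr hz; positivity
  linarith

@[simp] lemma phi_zero_right (a : ℂ) : phi a 0 = a := by simp [phi]

lemma phi_phi {a z : ℂ} (ha : a ∈ Disc) (hz : z ∈ Disc) : phi a (phi a z) = z := by
  have hd := one_sub_conj_mul_ne_zero ha hz
  have haa := one_sub_conj_mul_ne_zero ha ha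
  have hd' : 1 - z * conj a ≠ 0 := by rwa [mul_comm]
  have hnum : a - (a - z) / (1 - conj a * z) = z * (1 - conj a * a) / (1 - conj a * z) := by
    field_simp
    ring
  have hden :
      1 - conj a * ((a - z) / (1 - conj a * z)) = (1 - conj a * a) / (1 - conj a * z) := by
    field_simp
    ring
  rw [phi, phi, hnum, hden, div_div_div_cancel_right₀ hd, mul_div_cancel_right₀ _ haa]

lemma norm_phi_comm (a z : ℂ) : ‖phi a z‖ = ‖phi z a‖ := by
  have : 1 - conj z * a = conj (1 - conj a * z) := by simp [mul_comm]
  rw [phi, phi, norm_div, norm_div, norm_sub_rev, this, norm_conj]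

lemma phi_circle_mul (u : Circle) (a z : ℂ) : phi (u * a) (u * z) = u * phi a z := by
  have hu : conj (u : ℂ) * u = 1 := by
    rw [← Circle.coe_inv_eq_conj, ← Circle.coe_mul, inv_mul_cancel, Circle.coe_one]
  simp only [phi, map_mul]
  rw [← mul_sub, mul_div_assoc]
  congr 2
  linear_combination -(conj a * z) * hu

/-- The prefactor has modulus one; all that matters is that it does not depend on `z`. -/
lemma phi_phi_phi {a m z : ℂ} (ha : a ∈ Disc) (hm : m ∈ Disc) (hz : z ∈ Disc) :
    phi (phi a m) (phi a z) = -(1 - a * conj m) / (1 - conj a * m) * phi m z := by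
  have hdm := one_sub_conj_mul_ne_zero ha hm
  have hdz := one_sub_conj_mul_ne_zero ha hz
  have hd := one_sub_conj_mul_ne_zero (phi_mem_disc ha hm) (phi_mem_disc ha hz)
  have hmz := one_sub_conj_mul_ne_zero hm hz
  have hdm' : 1 - m * conj a ≠ 0 := by rwa [mul_comm]
  have hdz' : 1 - z * conj a ≠ 0 := by rwa [mul_comm]
  have hmz' : 1 - z * conj m ≠ 0 := by rwa [mul_comm]
  have hdm'' : 1 - a * conj m ≠ 0 :=
    fun h => hdm (by simpa [mul_comm] using congrArg conj h)
  rw [phi, div_eq_iff hd]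
  simp only [phi, map_div₀, map_sub, map_mul, map_one, conj_conj]
  field_simp
  ring

def IsHypMidpoint (m x y : ℂ) : Prop := m ∈ Disc ∧ phi m x = -phi m y

lemma IsHypMidpoint.map_phi {a m x y : ℂ} (ha : a ∈ Disc) (hx : x ∈ Disc) (hy : y ∈ Disc)
    (h : IsHypMidpoint m x y) : IsHypMidpoint (phi a m) (phi a x) (phi a y) :=
  ⟨phi_mem_disc ha h.1, by rw [phi_phi_phi ha h.1 hx, phi_phi_phi ha h.1 hy, h.2, mul_neg]⟩

lemma IsHypMidpoint.eq_zero_of_neg {c ξ : ℂ} (hξ : ξ ∈ Disc) (h : IsHypMidpoint c ξ (-ξ)) :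
    c = 0 := by
  have hd := one_sub_conj_mul_ne_zero h.1 hξ
  have hd' := one_sub_conj_mul_ne_zero h.1 (neg_mem_disc hξ)
  have h2 := h.2
  rw [phi, phi, div_eq_iff hd, ← neg_div, div_mul_eq_mul_div, eq_div_iff hd'] at h2
  have hc : c = conj c * ξ ^ 2 := by linear_combination h2 / 2
  have hnorm : ‖c‖ * (1 - ‖ξ‖ ^ 2) = 0 := by
    rw [mul_sub, mul_one, sub_eq_zero]
    conv_lhs => rw [hc, norm_mul, norm_conj, norm_pow]
  have hξ2 := mem_disc_iff_sq_norm_lt_one.mp hξ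
  simpa [sub_eq_zero, hξ2.ne'] using hnorm

/-- Moving `m` to `0` by `φ_m` turns `x, y` into a pair `ξ, -ξ`. -/
lemma IsHypMidpoint.unique {m n x y : ℂ} (hx : x ∈ Disc) (hy : y ∈ Disc)
    (hm : IsHypMidpoint m x y) (hn : IsHypMidpoint n x y) : m = n := by
  have hc := hn.map_phi hm.1 hx hy
  rw [show phi m y = -phi m x by rw [hm.2, neg_neg]] at hc
  rw [← phi_phi hm.1 hn.1, hc.eq_zero_of_neg (phi_mem_disc hm.1 hx), phi_zero_right]

/-- The midpoint of `0` and `w`: for `c = t w`, `φ_c 0 = -φ_c w` amounts to `2 t = 1 + t² ‖w‖²`,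
whose root in `(0, 1]` is `t = 1 / (1 + √(1 - ‖w‖²))`. -/
noncomputable def originMidpoint (w : ℂ) : ℂ := w / (1 + √(1 - ‖w‖ ^ 2) : ℝ)

lemma norm_originMidpoint_le (w : ℂ) : ‖originMidpoint w‖ ≤ ‖w‖ := by
  rw [originMidpoint, norm_div, norm_real, Real.norm_of_nonneg (by positivity)]
  exact div_le_self (norm_nonneg w) (le_add_of_nonneg_right (Real.sqrt_nonneg _))

lemma originMidpoint_mem_disc {w : ℂ} (hw : w ∈ Disc) : originMidpoint w ∈ Disc :=
  (norm_originMidpoint_le w).trans_lt hw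

lemma originMidpoint_circle_mul (u : Circle) (w : ℂ) :
    originMidpoint (u * w) = u * originMidpoint w := by
  rw [originMidpoint, originMidpoint, norm_mul, Circle.norm_coe, one_mul, mul_div_assoc]

lemma isHypMidpoint_originMidpoint {w : ℂ} (hw : w ∈ Disc) :
    IsHypMidpoint (originMidpoint w) 0 w := by
  refine ⟨originMidpoint_mem_disc hw, ?_⟩
  have hw2 := mem_disc_iff_sq_norm_lt_one.mp hw
  set s := √(1 - ‖w‖ ^ 2) with hs_def
  have hs : 0 < s := Real.sqrt_pos.mpr (by linarith)
  have hs2 : (s : ℂ) ^ 2 = 1 - conj w * w := by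
    rw [← ofReal_pow, hs_def, Real.sq_sqrt (by linarith), conj_mul']
    push_cast; ring
  have h1 : (1 + s : ℂ) ≠ 0 := by exact_mod_cast (by positivity : (1 + s : ℝ) ≠ 0)
  have h2 : (s : ℂ) ≠ 0 := by exact_mod_cast hs.ne'
  have hc : originMidpoint w = w / (1 + s) := by rw [originMidpoint]; push_cast; rfl
  have hconj : conj (originMidpoint w) * w = 1 - s := by
    rw [hc, map_div₀, map_add, map_one, conj_ofReal, div_mul_eq_mul_div, div_eq_iff h1]
    linear_combination hs2
  rw [phi_zero_right, phi, hconj, sub_sub_cancel, hc]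
  field_simp
  ring

lemma IsHypMidpoint.eq_phi_originMidpoint {m x w : ℂ} (hx : x ∈ Disc) (hw : w ∈ Disc)
    (hm : IsHypMidpoint m x (phi x w)) : m = phi x (originMidpoint w) :=
  hm.unique hx (phi_mem_disc hx hw)
    (by simpa using (isHypMidpoint_originMidpoint hw).map_phi hx zero_mem_disc hw)

lemma ae_mem_disc_hypMeasure : ∀ᵐ z ∂hypMeasure, z ∈ Disc :=
  (withDensity_absolutelyContinuous _ _).ae_le (ae_restrict_mem measurableSet_disc)

instance : SFinite hypMeasure := by
  rw [hypMeasure]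
  infer_instance

lemma lintegral_hypMeasure (f : ℂ → ℝ≥0∞) :
    ∫⁻ z, f z ∂hypMeasure = ∫⁻ z in Disc, ENNReal.ofReal ((1 - ‖z‖ ^ 2)⁻¹ ^ 2) * f z :=
  lintegral_withDensity_eq_lintegral_mul_non_measurable _ (by fun_prop)
    (.of_forall fun _ => ENNReal.ofReal_lt_top) f

lemma det_restrictScalars_toSpanSingleton (c : ℂ) :
    ((ContinuousLinearMap.toSpanSingleton ℂ c).restrictScalars ℝ).det = normSq c := by
  simp [ContinuousLinearMap.det, LinearMap.det_restrictScalars, Algebra.norm_complex_eq]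

/-- `hmetric` says that `g` preserves the metric `|dz| / (1 - |z|²)`, so that the Jacobian
`‖g'‖²` cancels against the change of density. -/
theorem lintegral_hypMeasure_comp {g g' : ℂ → ℂ} (himage : g '' Disc = Disc)
    (hinj : InjOn g Disc) (hderiv : ∀ z ∈ Disc, HasDerivAt g (g' z) z)
    (hmetric : ∀ z ∈ Disc, ‖g' z‖ * (1 - ‖z‖ ^ 2) = 1 - ‖g z‖ ^ 2) (f : ℂ → ℝ≥0∞) :
    ∫⁻ z, f (g z) ∂hypMeasure = ∫⁻ z, f z ∂hypMeasure := by
  have hcov := lintegral_image_eq_lintegral_abs_det_fderiv_mul volume measurableSet_disc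
    (fun z hz => ((hderiv z hz).hasFDerivAt.restrictScalars ℝ).hasFDerivWithinAt) hinj
    (fun z => ENNReal.ofReal ((1 - ‖z‖ ^ 2)⁻¹ ^ 2) * f z)
  rw [himage] at hcov
  rw [lintegral_hypMeasure, lintegral_hypMeasure, hcov]
  refine setLIntegral_congr_fun measurableSet_disc fun z hz => ?_
  rw [det_restrictScalars_toSpanSingleton, ← mul_assoc, ← ENNReal.ofReal_mul (abs_nonneg _)]
  congr 2
  have hgz : 0 < 1 - ‖g z‖ ^ 2 :=
    sub_pos.mpr (mem_disc_iff_sq_norm_lt_one.mp (himage.subset (mem_image_of_mem g hz)))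
  have hz' : 0 < 1 - ‖z‖ ^ 2 := sub_pos.mpr (mem_disc_iff_sq_norm_lt_one.mp hz)
  have hg' : 0 < ‖g' z‖ := pos_of_mul_pos_left (hmetric z hz ▸ hgz) hz'.le
  rw [abs_of_nonneg (normSq_nonneg _), normSq_eq_norm_sq, ← hmetric z hz]
  field_simp

lemma hasDerivAt_phi {a z : ℂ} (hz : 1 - conj a * z ≠ 0) :
    HasDerivAt (phi a) ((‖a‖ ^ 2 - 1 : ℝ) / (1 - conj a * z) ^ 2) z := by
  have hnum : HasDerivAt (fun w => a - w) (-1) z := (hasDerivAt_id z).const_sub a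
  have hden : HasDerivAt (fun w => 1 - conj a * w) (-conj a) z := by
    simpa using ((hasDerivAt_id z).const_mul (conj a)).const_sub 1
  refine (hnum.div hden hz).congr_deriv ?_
  push_cast
  rw [← conj_mul']
  ring

lemma lintegral_hypMeasure_comp_phi {a : ℂ} (ha : a ∈ Disc) (f : ℂ → ℝ≥0∞) :
    ∫⁻ z, f (phi a z) ∂hypMeasure = ∫⁻ z, f z ∂hypMeasure := by
  refine lintegral_hypMeasure_comp ?_ (fun x hx y hy h => ?_)
    (fun z hz => hasDerivAt_phi (one_sub_conj_mul_ne_zero ha hz)) (fun z hz => ?_) f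
  · exact (image_subset_iff.mpr fun z => phi_mem_disc ha).antisymm
      fun z hz => ⟨phi a z, phi_mem_disc ha hz, phi_phi ha hz⟩
  · rw [← phi_phi ha hx, h, phi_phi ha hy]
  · have ha' : 0 ≤ 1 - ‖a‖ ^ 2 := sub_nonneg.mpr (mem_disc_iff_sq_norm_lt_one.mp ha).le
    rw [one_sub_sq_norm_phi ha hz, norm_div, norm_pow, norm_real, Real.norm_eq_abs, abs_sub_comm,
      abs_of_nonneg ha']
    ring

lemma lintegral_hypMeasure_comp_circle_mul (u : Circle) (f : ℂ → ℝ≥0∞) :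
    ∫⁻ z, f (u * z) ∂hypMeasure = ∫⁻ z, f z ∂hypMeasure := by
  have hnorm (v : Circle) (z : ℂ) : ‖(v : ℂ) * z‖ = ‖z‖ := by
    rw [norm_mul, Circle.norm_coe, one_mul]
  refine lintegral_hypMeasure_comp (g' := fun _ => u) ?_
    (fun x _ y _ h => mul_left_cancel₀ u.coe_ne_zero h)
    (fun z _ => by simpa using (hasDerivAt_id z).const_mul (u : ℂ))
    (fun z _ => by rw [hnorm, Circle.norm_coe, one_mul]) f
  refine (image_subset_iff.mpr fun z hz => ?_).antisymm fun z hz => ⟨(u⁻¹ : Circle) * z, ?_, ?_⟩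
  · exact (hnorm u z).trans_lt hz
  · exact (hnorm u⁻¹ z).trans_lt hz
  · simp

@[fun_prop]
lemma Measurable.phi {α : Type*} [MeasurableSpace α] {f g : α → ℂ} (hf : Measurable f)
    (hg : Measurable g) : Measurable fun x => phi (f x) (g x) := by
  unfold _root_.phi
  fun_prop

@[fun_prop]
lemma measurable_originMidpoint : Measurable originMidpoint := by
  unfold originMidpoint
  fun_prop

@[fun_prop]
lemma Measurable.coe_toCircle {α : Type*} [MeasurableSpace α] {f : α → UnitAddCircle}
    (hf : Measurable f) : Measurable fun x => (AddCircle.toCircle (f x) : ℂ) :=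
  (continuous_subtype_val.comp AddCircle.continuous_toCircle).measurable.comp hf

noncomputable def rotationAverage (Φ : ℂ → ℝ≥0∞) (v : ℂ) : ℝ≥0∞ :=
  ∫⁻ θ : UnitAddCircle, Φ (AddCircle.toCircle θ * v)

lemma rotationAverage_circle_mul (Φ : ℂ → ℝ≥0∞) (u : Circle) (v : ℂ) :
    rotationAverage Φ (u * v) = rotationAverage Φ v := by
  obtain ⟨a, rfl⟩ := (AddCircle.homeomorphCircle one_ne_zero).surjective u
  simp_rw [rotationAverage, AddCircle.homeomorphCircle_apply, ← mul_assoc, ← Circle.coe_mul,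
    ← AddCircle.toCircle_add]
  exact lintegral_add_right_eq_self (fun θ => Φ (AddCircle.toCircle θ * v)) a

lemma rotationAverage_eq_of_norm_eq (Φ : ℂ → ℝ≥0∞) {v w : ℂ} (h : ‖v‖ = ‖w‖) :
    rotationAverage Φ v = rotationAverage Φ w := by
  rcases eq_or_ne v 0 with rfl | hv
  · rw [norm_zero, eq_comm, norm_eq_zero] at h
    rw [h]
  let u : Circle := ⟨w / v, by simp [Submonoid.unitSphere, ← h, hv]⟩
  have hw : w = u * v := (div_mul_cancel₀ w hv).symm
  rw [hw, rotationAverage_circle_mul]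

lemma lintegral_rotationAverage {Φ : ℂ → ℝ≥0∞} (hΦ : Measurable Φ) :
    ∫⁻ v, rotationAverage Φ v ∂hypMeasure = ∫⁻ v, Φ v ∂hypMeasure := by
  unfold rotationAverage
  rw [lintegral_lintegral_swap (by fun_prop)]
  simp_rw [lintegral_hypMeasure_comp_circle_mul, lintegral_const, UnitAddCircle.measure_univ,
    mul_one]

lemma lintegral_rotationAverage_phi {Φ : ℂ → ℝ≥0∞} (hΦ : Measurable Φ) {c : ℂ} (hc : c ∈ Disc) :
    ∫⁻ x, rotationAverage Φ (phi x c) ∂hypMeasure = ∫⁻ v, Φ v ∂hypMeasure := by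
  simp_rw [rotationAverage_eq_of_norm_eq Φ (norm_phi_comm _ c)]
  rw [lintegral_hypMeasure_comp_phi hc (rotationAverage Φ), lintegral_rotationAverage hΦ]

theorem lintegral_lintegral_phi_originMidpoint {G : ℂ × ℝ → ℝ≥0∞} (hG : Measurable G) :
    ∫⁻ x, ∫⁻ w, G (phi x (originMidpoint w), ‖w‖) ∂hypMeasure ∂hypMeasure
      = ∫⁻ x, ∫⁻ w, G (x, ‖w‖) ∂hypMeasure ∂hypMeasure := by
  set H : ℂ → ℝ≥0∞ := fun w => ∫⁻ x, G (phi x (originMidpoint w), ‖w‖) ∂hypMeasure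
  have hH : Measurable H :=
    (show Measurable fun p : ℂ × ℂ => G (phi p.2 (originMidpoint p.1), ‖p.1‖) by
      fun_prop).lintegral_prod_right'
  have hH_circle_mul (u : Circle) (w : ℂ) :
      H (u * w) = ∫⁻ x, G (u * phi x (originMidpoint w), ‖w‖) ∂hypMeasure := by
    simp only [H, originMidpoint_circle_mul, norm_mul, Circle.norm_coe, one_mul]
    rw [← lintegral_hypMeasure_comp_circle_mul u fun x => G (phi x (u * originMidpoint w), ‖w‖)]
    simp only [phi_circle_mul]
  have hH_avg : ∀ w ∈ Disc, rotationAverage H w = ∫⁻ x, G (x, ‖w‖) ∂hypMeasure := by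
    intro w hw
    simp only [rotationAverage, hH_circle_mul]
    rw [lintegral_lintegral_swap (by fun_prop)]
    exact lintegral_rotationAverage_phi (Φ := fun v => G (v, ‖w‖)) (by fun_prop)
      (originMidpoint_mem_disc hw)
  calc ∫⁻ x, ∫⁻ w, G (phi x (originMidpoint w), ‖w‖) ∂hypMeasure ∂hypMeasure
      = ∫⁻ w, H w ∂hypMeasure := lintegral_lintegral_swap (by fun_prop)
    _ = ∫⁻ w, rotationAverage H w ∂hypMeasure := (lintegral_rotationAverage hH).symm
    _ = ∫⁻ w, ∫⁻ x, G (x, ‖w‖) ∂hypMeasure ∂hypMeasure :=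
      lintegral_congr_ae (ae_mem_disc_hypMeasure.mono hH_avg)
    _ = ∫⁻ x, ∫⁻ w, G (x, ‖w‖) ∂hypMeasure ∂hypMeasure := lintegral_lintegral_swap (by fun_prop)

lemma lintegral_lintegral_hypMeasure_congr {f g : ℂ → ℂ → ℝ≥0∞}
    (h : ∀ x ∈ Disc, ∀ y ∈ Disc, f x y = g x y) :
    ∫⁻ x, ∫⁻ y, f x y ∂hypMeasure ∂hypMeasure = ∫⁻ x, ∫⁻ y, g x y ∂hypMeasure ∂hypMeasure :=
  lintegral_congr_ae <| ae_mem_disc_hypMeasure.mono fun x hx =>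
    lintegral_congr_ae <| ae_mem_disc_hypMeasure.mono fun y hy => h x hx y hy

/-- If `A : 𝔻 × 𝔻 → ℂ` is Borel measurable and `K`-invariant in its second
argument, then `∫∫ |A(x,y)|² dμ(y) dμ(x) = ∫∫ |A(M(x,y), φ_x(y))|² dμ(y) dμ(x)`,
where `M` is the geodesic midpoint map. -/
theorem stmt0 (M : ℂ → ℂ → ℂ)
    (hM : ∀ x ∈ Disc, ∀ y ∈ Disc, M x y ∈ Disc ∧ phi (M x y) x = -(phi (M x y) y))
    (A : ℂ × ℂ → ℂ) (hA : Measurable A)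
    (hK : ∀ x ∈ Disc, ∀ y ∈ Disc, ∀ α : ℝ,
      A (x, Complex.exp (Complex.I * α) * y) = A (x, y)) :
    ∫⁻ x, (∫⁻ y, ENNReal.ofReal (‖A (x, y)‖ ^ 2) ∂hypMeasure) ∂hypMeasure
      = ∫⁻ x, (∫⁻ y, ENNReal.ofReal (‖A (M x y, phi x y)‖ ^ 2) ∂hypMeasure)
          ∂hypMeasure := by
  have hA_radial : ∀ x ∈ Disc, ∀ y ∈ Disc, A (x, y) = A (x, (‖y‖ : ℂ)) := by
    intro x hx y hy
    have hy' : ((‖y‖ : ℝ) : ℂ) ∈ Disc := by simpa [Disc] using hy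
    calc A (x, y) = A (x, exp (I * arg y) * ‖y‖) := by
          rw [mul_comm I, mul_comm, norm_mul_exp_arg_mul_I]
      _ = A (x, ‖y‖) := hK x hx _ hy' _
  symm
  calc ∫⁻ x, ∫⁻ y, ENNReal.ofReal (‖A (M x y, phi x y)‖ ^ 2) ∂hypMeasure ∂hypMeasure
      = ∫⁻ x, ∫⁻ w, ENNReal.ofReal (‖A (phi x (originMidpoint w), w)‖ ^ 2)
          ∂hypMeasure ∂hypMeasure := by
        refine lintegral_congr_ae (ae_mem_disc_hypMeasure.mono fun x hx => ?_)
        dsimp only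
        rw [← lintegral_hypMeasure_comp_phi hx]
        refine lintegral_congr_ae (ae_mem_disc_hypMeasure.mono fun w hw => ?_)
        dsimp only
        rw [phi_phi hx hw,
          IsHypMidpoint.eq_phi_originMidpoint hx hw (hM x hx _ (phi_mem_disc hx hw))]
    _ = ∫⁻ x, ∫⁻ w, ENNReal.ofReal (‖A (phi x (originMidpoint w), (‖w‖ : ℂ))‖ ^ 2)
          ∂hypMeasure ∂hypMeasure :=
        lintegral_lintegral_hypMeasure_congr fun x hx w hw => by
          rw [hA_radial _ (phi_mem_disc hx (originMidpoint_mem_disc hw)) w hw]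
    _ = ∫⁻ x, ∫⁻ w, ENNReal.ofReal (‖A (x, (‖w‖ : ℂ))‖ ^ 2) ∂hypMeasure ∂hypMeasure :=
        lintegral_lintegral_phi_originMidpoint (G := fun p => ENNReal.ofReal (‖A (p.1, p.2)‖ ^ 2))
          (by fun_prop)
    _ = ∫⁻ x, ∫⁻ y, ENNReal.ofReal (‖A (x, y)‖ ^ 2) ∂hypMeasure ∂hypMeasure :=
        lintegral_lintegral_hypMeasure_congr fun x hx y hy => by rw [hA_radial x hx y hy]
end

section
/- For all x, y ∈ 𝔻 and λ ∈ ℝ, Φ_λ(φ_x(y)) = Φ_λ(φ_y(x)). -/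
/-
Write `w = 1 - x̄y`. Then `1 - ȳx = w̄`, so `φ_y(x) = -(w / w̄) · φ_x(y)`, a unimodular multiple of
`φ_x(y)`. It therefore suffices that `Φ_λ` is rotation invariant: rotating `z` by `c` amounts to
rotating the boundary point `b` of the plane wave by `c̄`, and the mean over the circle does not
see such a rotation.
-/

open MeasureTheory

/-- The plane wave `e_{λ,b}(z) = ((1 - |z|²)/|z - b|²)^{(1+iλ)/2}`. -/
noncomputable def pw (lam : ℝ) (b z : ℂ) : ℂ :=
  (((1 - ‖z‖ ^ 2) / ‖z - b‖ ^ 2 : ℝ) : ℂ) ^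
    ((1 + Complex.I * (lam : ℂ)) / 2)

/-- The spherical function `Φ_λ(z) = (1/(2π)) ∫₀^{2π} e_{λ,e^{iθ}}(z) dθ`. -/
noncomputable def sphFn (lam : ℝ) (z : ℂ) : ℂ :=
  (1 / (2 * Real.pi) : ℝ) •
    ∫ θ in (0:ℝ)..(2 * Real.pi), pw lam (Complex.exp (Complex.I * (θ : ℂ))) z

open ComplexConjugate

lemma conj_one_sub_conj_mul (x y : ℂ) : conj (1 - conj x * y) = 1 - conj y * x := by
  rw [map_sub, map_one, map_mul, Complex.conj_conj, mul_comm]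

lemma exists_norm_eq_one_phi_swap (x y : ℂ) : ∃ c : ℂ, ‖c‖ = 1 ∧ phi y x = c * phi x y := by
  set w := 1 - conj x * y with hw
  have hw' : 1 - conj y * x = conj w := (conj_one_sub_conj_mul x y).symm
  by_cases h : w = 0
  · -- both quotients have denominator `0`
    refine ⟨1, norm_one, ?_⟩
    simp [phi, hw', ← hw, h]
  · refine ⟨-(w / conj w), by simp [h], ?_⟩
    have h' : conj w ≠ 0 := (map_ne_zero _).mpr h
    simp only [phi, hw', ← hw]
    field_simp
    ring

lemma pw_mul_left (lam : ℝ) (b c z : ℂ) (hc : ‖c‖ = 1) :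
    pw lam b (c * z) = pw lam (conj c * b) z := by
  have hcc : c * conj c = 1 := by
    rw [Complex.mul_conj, Complex.normSq_eq_norm_sq, hc]; norm_num
  have hsub : c * z - b = c * (z - conj c * b) := by
    rw [mul_sub, ← mul_assoc, hcc, one_mul]
  simp only [pw, hsub, norm_mul, hc, one_mul]

lemma intervalIntegral_comp_mul_exp_mul_I {E : Type*} [NormedAddCommGroup E] [NormedSpace ℝ E]
    (f : ℂ → E) {u : ℂ} (hu : ‖u‖ = 1) :
    ∫ θ in (0 : ℝ)..2 * Real.pi, f (u * Complex.exp (Complex.I * θ)) =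
      ∫ θ in (0 : ℝ)..2 * Real.pi, f (Complex.exp (Complex.I * θ)) := by
  obtain ⟨α, rfl⟩ : ∃ α : ℝ, Complex.exp (Complex.I * α) = u :=
    ⟨u.arg, by simpa [hu, mul_comm] using Complex.norm_mul_exp_arg_mul_I u⟩
  set g : ℝ → E := fun θ ↦ f (Complex.exp (Complex.I * θ))
  have hg : Function.Periodic g (2 * Real.pi) := fun θ ↦ by
    simp only [g, Complex.ofReal_add, mul_add, Complex.exp_add, Complex.ofReal_mul,
      Complex.ofReal_ofNat, mul_comm Complex.I (2 * _), Complex.exp_two_pi_mul_I, mul_one]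
  have hrot : ∀ θ : ℝ, Complex.exp (Complex.I * α) * Complex.exp (Complex.I * θ) =
      Complex.exp (Complex.I * ↑(θ + α)) := fun θ ↦ by
    rw [← Complex.exp_add]; push_cast; ring_nf
  simp only [hrot]
  change ∫ θ in (0 : ℝ)..2 * Real.pi, g (θ + α) = ∫ θ in (0 : ℝ)..2 * Real.pi, g θ
  rw [intervalIntegral.integral_comp_add_right g α, zero_add, add_comm _ α]
  simpa using hg.intervalIntegral_add_eq α 0

lemma sphFn_mul_left (lam : ℝ) {c : ℂ} (hc : ‖c‖ = 1) (z : ℂ) :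
    sphFn lam (c * z) = sphFn lam z := by
  simp only [sphFn, pw_mul_left lam _ c z hc]
  rw [intervalIntegral_comp_mul_exp_mul_I (fun b ↦ pw lam b z) (by rwa [Complex.norm_conj])]

theorem stmt9_general (x : ℂ) (y : ℂ) (lam : ℝ) :
    sphFn lam (phi x y) = sphFn lam (phi y x) := by
  obtain ⟨c, hc, hswap⟩ := exists_norm_eq_one_phi_swap x y
  rw [hswap, sphFn_mul_left lam hc]

/-- The second identity of Lemma 8: `Φ_λ(φ_x(y)) = Φ_λ(φ_y(x))`. -/
theorem stmt9 (x : ℂ) (hx : x ∈ Disc) (y : ℂ) (hy : y ∈ Disc) (lam : ℝ) :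
    sphFn lam (phi x y) = sphFn lam (phi y x) :=
  stmt9_general x y lam
end
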